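/- If f : Ω → Ω is a monotone function and α is a countable limit ordinal, then for every β ∈ Ω the limit lim_{ξ→α} Iter_ξ f β exists and Iter_α f β = lim_{ξ→α} Iter_ξ f β (i.e., limsup_{ξ→α} Iter_ξ f β = liminf_{ξ→α} Iter_ξ f β = Iter_α f β). -/

import Mathlib

/-!  Framework: finite type structure over Ω = countable ordinals,
     limsup/liminf, transfinite iteration functionals, hereditarily
     positive and hereditarily monotone functionals. -/

noncomputable section
namespace IterOrd

open Ordinal

theorem omega1_pos : (0 : Ordinal) < ω₁ := Ordinal.omega0_pos.trans Ordinal.omega0_lt_omega_one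

/-- `Om` is Ω, the set of countable ordinals (ordinals `< ω₁`). -/
abbrev Om : Type 1 := {o : Ordinal // o < ω₁}

/-- Infimum of a subset of Ω (the minimum for nonempty sets; `0` for `∅`). -/
def infOm (s : Set Om) : Om :=
  ⟨sInf (Subtype.val '' s), by
    rcases (Subtype.val '' s).eq_empty_or_nonempty with h | h
    · rw [h]; simpa using omega1_pos
    · obtain ⟨x, _, he⟩ := csInf_mem h
      exact he ▸ x.2⟩

/-- Supremum of a subset of Ω.  Whenever the supremum of the set exists in Ω
(in particular for every countable subset, by regularity of `ω₁`) this is the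
genuine supremum; otherwise it takes a junk value. -/
def supOm (s : Set Om) : Om :=
  if h : sSup (Subtype.val '' s) < ω₁ then ⟨sSup (Subtype.val '' s), h⟩ else ⟨0, omega1_pos⟩

/-- Finite types over the base type `o` (interpreted as Ω). -/
inductive Ty : Type
  | base : Ty
  | arrow : Ty → Ty → Ty
deriving DecidableEq

/-- The full type structure over Ω: `El base = Ω` and
`El (arrow σ τ)` is the set of all functions `El σ → El τ`. -/
@[reducible] def El : Ty → Type 1
  | .base => Om
  | .arrow σ τ => El σ → El τ

/-- The order on each `El σ`: the ordinal order at base type, pointwise at arrow types. -/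
def Le : (σ : Ty) → El σ → El σ → Prop
  | .base => fun x y => x ≤ y
  | .arrow σ τ => fun f g => ∀ x : El σ, Le τ (f x) (g x)

/-- Suprema, computed pointwise at function types. -/
def supEl : (σ : Ty) → Set (El σ) → El σ
  | .base => supOm
  | .arrow σ τ => fun S (x : El σ) => supEl τ ((fun f : El (.arrow σ τ) => f x) '' S)

/-- Infima, computed pointwise at function types. -/
def infEl : (σ : Ty) → Set (El σ) → El σ
  | .base => infOm
  | .arrow σ τ => fun S (x : El σ) => infEl τ ((fun f : El (.arrow σ τ) => f x) '' S)

/-- `limsup_{ξ→ζ} f ξ = inf_{γ<ζ} sup_{γ≤ξ<ζ} f ξ`. -/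
def limsupEl (σ : Ty) (ζ : Ordinal) (f : ∀ ξ : Ordinal, ξ < ζ → El σ) : El σ :=
  infEl σ {y | ∃ γ, ∃ _ : γ < ζ, y = supEl σ {z | ∃ ξ, ∃ h : ξ < ζ, γ ≤ ξ ∧ z = f ξ h}}

/-- `liminf_{ξ→ζ} f ξ = sup_{γ<ζ} inf_{γ≤ξ<ζ} f ξ`. -/
def liminfEl (σ : Ty) (ζ : Ordinal) (f : ∀ ξ : Ordinal, ξ < ζ → El σ) : El σ :=
  supEl σ {y | ∃ γ, ∃ _ : γ < ζ, y = infEl σ {z | ∃ ξ, ∃ h : ξ < ζ, γ ≤ ξ ∧ z = f ξ h}}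

/-- `limsup` of a ζ-indexed sequence of ordinals. -/
def oLimsup (ζ : Ordinal) (a : Ordinal → Ordinal) : Ordinal :=
  sInf {s | ∃ γ, γ < ζ ∧ s = sSup (a '' {ξ | γ ≤ ξ ∧ ξ < ζ})}

/-- `liminf` of a ζ-indexed sequence of ordinals. -/
def oLiminf (ζ : Ordinal) (a : Ordinal → Ordinal) : Ordinal :=
  sSup {s | ∃ γ, γ < ζ ∧ s = sInf (a '' {ξ | γ ≤ ξ ∧ ξ < ζ})}

/-- The α-iteration functional of type σ:
`Iter 0 f x = x`, `Iter (α+1) f x = f (Iter α f x)`, and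
`Iter μ f x = limsup_{ξ→μ} Iter ξ f x` for limit μ. -/
def Iter (σ : Ty) (α : Ordinal) : (El σ → El σ) → El σ → El σ :=
  Ordinal.limitRecOn (motive := fun _ => (El σ → El σ) → El σ → El σ) α
    (fun _ x => x)
    (fun _ ih f x => f (ih f x))
    (fun μ _ ih f x => limsupEl σ μ (fun ξ h => ih ξ h f x))

/-- The pair (hereditarily positive, ≤hp), defined simultaneously by recursion on the type.
Every element of `Ω` and of `Ω_{ρ→τ}` with `ρ ≠ τ` is h.p., and `≤hp` there is `≤`;
`f : Ω_{τ→τ}` is h.p. iff it preserves h.p., is inflationary on h.p. arguments and is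
monotone (w.r.t. `≤hp`) on h.p. arguments; `f ≤hp f'` on `Ω_{τ→τ}` iff `f x ≤hp f' x`
for every h.p. `x`. -/
def HPaux : (σ : Ty) → (El σ → Prop) × (El σ → El σ → Prop)
  | .base => ⟨fun _ => True, fun x y => x ≤ y⟩
  | .arrow ρ τ =>
      ⟨fun f =>
        if h : ρ = τ then
          (∀ x, (HPaux ρ).1 x → (HPaux τ).1 (f x)) ∧
          (∀ x, (HPaux ρ).1 x → (HPaux τ).2 (cast (congrArg El h) x) (f x)) ∧
          (∀ x y, (HPaux ρ).1 x → (HPaux ρ).1 y → (HPaux ρ).2 x y → (HPaux τ).2 (f x) (f y))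
        else True,
       fun f g =>
        if ρ = τ then ∀ x, (HPaux ρ).1 x → (HPaux τ).2 (f x) (g x)
        else Le (.arrow ρ τ) f g⟩

/-- Hereditarily positive functionals. -/
def Hp (σ : Ty) : El σ → Prop := (HPaux σ).1

/-- The order `≤hp`. -/
def HpLe (σ : Ty) : El σ → El σ → Prop := (HPaux σ).2

/-- `f =hp g` iff `f ≤hp g` and `g ≤hp f`. -/
def HpEq (σ : Ty) (f g : El σ) : Prop := HpLe σ f g ∧ HpLe σ g f

/-- The pair (hereditarily monotone, ≤ on the hereditarily monotone structure),
by recursion on the type.  `f` is hereditarily monotone iff it maps hereditarily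
monotone arguments to hereditarily monotone values, monotonically; the order is
pointwise over hereditarily monotone arguments (i.e. the order of `Ω^mon`). -/
def HMaux : (σ : Ty) → (El σ → Prop) × (El σ → El σ → Prop)
  | .base => ⟨fun _ => True, fun x y => x ≤ y⟩
  | .arrow σ τ =>
      ⟨fun f =>
        (∀ x, (HMaux σ).1 x → (HMaux τ).1 (f x)) ∧
        (∀ x y, (HMaux σ).1 x → (HMaux σ).1 y → (HMaux σ).2 x y → (HMaux τ).2 (f x) (f y)),
       fun f g => ∀ x, (HMaux σ).1 x → (HMaux τ).2 (f x) (g x)⟩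

/-- Hereditarily monotone functionals: the members of the type structure `Ω^mon`. -/
def HM (σ : Ty) : El σ → Prop := (HMaux σ).1

/-- The (pointwise) order of the hereditarily monotone type structure `Ω^mon`. -/
def LeHM (σ : Ty) : El σ → El σ → Prop := (HMaux σ).2

/-- Equality in the hereditarily monotone type structure `Ω^mon`. -/
def EqHM (σ : Ty) (f g : El σ) : Prop := LeHM σ f g ∧ LeHM σ g f

/-!
If `β ≤ f β`, the iterates `ξ ↦ Iter_ξ f β` are increasing on `Ω`: at a successor this is
monotonicity of `f`, and at a limit `μ` an increasing family lies below its `limsup`, while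
`Iter_μ f β ≤ f (Iter_μ f β)` because every earlier iterate satisfies
`Iter_ξ f β ≤ Iter_{ξ+1} f β = f (Iter_ξ f β) ≤ f (Iter_μ f β)`. Dually, if `f β ≤ β` they are
decreasing. For a monotone or antitone family indexed below a countable limit ordinal the `liminf`
and the `limsup` coincide (countability makes the suprema of tails genuine suprema), and the
`limsup` is `Iter_α f β` by definition.
-/

open Set

theorem sSup_lt_omega_one {S : Set Ordinal} (hS : S.Countable) (h : ∀ x ∈ S, x < ω₁) :
    sSup S < ω₁ := by
  have := hS.to_subtype
  rw [sSup_eq_iSup']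
  exact Ordinal.iSup_lt_omega_one fun x => h x x.2

theorem countable_Iio_of_lt_omega_one {ζ : Ordinal} (hζ : ζ < ω₁) : (Iio ζ).Countable := by
  rw [← Cardinal.le_aleph0_iff_set_countable, Cardinal.mk_Iio_ordinal, Cardinal.lift_le_aleph0,
    ← Cardinal.lt_aleph_one_iff, ← Cardinal.lt_ord, Cardinal.ord_aleph]
  exact hζ

theorem infOm_le {s : Set Om} {a : Om} (ha : a ∈ s) : infOm s ≤ a :=
  show sInf (Subtype.val '' s) ≤ a.1 from csInf_le (OrderBot.bddBelow _) (mem_image_of_mem _ ha)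

theorem le_infOm {s : Set Om} {a : Om} (hne : s.Nonempty) (h : ∀ b ∈ s, a ≤ b) :
    a ≤ infOm s :=
  show a.1 ≤ sInf (Subtype.val '' s) from le_csInf (hne.image _) (forall_mem_image.2 h)

theorem supOm_le {s : Set Om} {a : Om} (h : ∀ b ∈ s, b ≤ a) : supOm s ≤ a := by
  unfold supOm
  split
  · exact show sSup (Subtype.val '' s) ≤ a.1 from csSup_le' (forall_mem_image.2 h)
  · exact zero_le (a := a.1)

theorem le_supOm {s : Set Om} {a : Om} (hs : s.Countable) (ha : a ∈ s) : a ≤ supOm s := by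
  have hlt : sSup (Subtype.val '' s) < ω₁ :=
    sSup_lt_omega_one (hs.image _) (forall_mem_image.2 fun b _ => b.2)
  rw [supOm, dif_pos hlt]
  have := (hs.image Subtype.val).to_subtype
  exact le_csSup Ordinal.bddAbove_of_small (mem_image_of_mem _ ha)

section LimsupLiminf

variable {X : Ordinal → Om} {ζ : Ordinal} {b : Om}

/-- `{X ξ | γ ≤ ξ < ζ}`, written exactly as the tails inside `limsupEl` and `liminfEl`. -/
def tail (X : Ordinal → Om) (ζ γ : Ordinal) : Set Om :=
  {z | ∃ ξ, ∃ _ : ξ < ζ, γ ≤ ξ ∧ z = X ξ}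

theorem limsupEl_base_eq :
    limsupEl .base ζ (fun ξ _ => X ξ) = infOm {y | ∃ γ, ∃ _ : γ < ζ, y = supOm (tail X ζ γ)} :=
  rfl

theorem liminfEl_base_eq :
    liminfEl .base ζ (fun ξ _ => X ξ) = supOm {y | ∃ γ, ∃ _ : γ < ζ, y = infOm (tail X ζ γ)} :=
  rfl

theorem countable_tail (hζ : ζ < ω₁) (γ : Ordinal) : (tail X ζ γ).Countable := by
  refine ((countable_Iio_of_lt_omega_one hζ).image X).mono ?_
  rintro _ ⟨ξ, hξ, -, rfl⟩
  exact mem_image_of_mem X hξ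

theorem limsupEl_base_le {γ : Ordinal} (hγ : γ < ζ) (h : ∀ ξ, γ ≤ ξ → ξ < ζ → X ξ ≤ b) :
    limsupEl .base ζ (fun ξ _ => X ξ) ≤ b := by
  rw [limsupEl_base_eq]
  refine le_trans (infOm_le ⟨γ, hγ, rfl⟩) (supOm_le ?_)
  rintro _ ⟨ξ, hξ, hγξ, rfl⟩
  exact h ξ hγξ hξ

theorem le_limsupEl_base (hζ : ζ < ω₁) (h0 : 0 < ζ)
    (h : ∀ γ < ζ, ∃ ξ, γ ≤ ξ ∧ ξ < ζ ∧ b ≤ X ξ) : b ≤ limsupEl .base ζ (fun ξ _ => X ξ) := by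
  rw [limsupEl_base_eq]
  refine le_infOm ⟨_, 0, h0, rfl⟩ ?_
  rintro _ ⟨γ, hγ, rfl⟩
  obtain ⟨ξ, hγξ, hξ, hb⟩ := h γ hγ
  exact hb.trans (le_supOm (countable_tail hζ γ) ⟨ξ, hξ, hγξ, rfl⟩)

theorem le_liminfEl_base (hζ : ζ < ω₁) {γ : Ordinal} (hγ : γ < ζ)
    (h : ∀ ξ, γ ≤ ξ → ξ < ζ → b ≤ X ξ) : b ≤ liminfEl .base ζ (fun ξ _ => X ξ) := by
  rw [liminfEl_base_eq]
  have hb : b ≤ infOm (tail X ζ γ) := by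
    refine le_infOm ⟨X γ, γ, hγ, le_rfl, rfl⟩ ?_
    rintro _ ⟨ξ, hξ, hγξ, rfl⟩
    exact h ξ hγξ hξ
  refine hb.trans (le_supOm ?_ ⟨γ, hγ, rfl⟩)
  refine ((countable_Iio_of_lt_omega_one hζ).image fun γ => infOm (tail X ζ γ)).mono ?_
  rintro _ ⟨γ, hγ, rfl⟩
  exact mem_image_of_mem _ hγ

theorem liminfEl_base_le_limsupEl_base (hζ : ζ < ω₁) (h0 : 0 < ζ) :
    liminfEl .base ζ (fun ξ _ => X ξ) ≤ limsupEl .base ζ (fun ξ _ => X ξ) := by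
  rw [liminfEl_base_eq]
  refine supOm_le ?_
  rintro _ ⟨γ, hγ, rfl⟩
  refine le_limsupEl_base hζ h0 fun γ' hγ' => ?_
  have hmax : max γ γ' < ζ := max_lt hγ hγ'
  exact ⟨max γ γ', le_max_right _ _, hmax, infOm_le ⟨_, hmax, le_max_left _ _, rfl⟩⟩

theorem le_limsupEl_base_of_monotoneOn (hX : MonotoneOn X (Iio ζ)) (hζ : ζ < ω₁) {ξ : Ordinal}
    (hξ : ξ < ζ) : X ξ ≤ limsupEl .base ζ (fun ξ _ => X ξ) :=
  le_limsupEl_base hζ (pos_of_gt hξ) fun γ hγ =>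
    ⟨max ξ γ, le_max_right _ _, max_lt hξ hγ, hX hξ (max_lt hξ hγ) (le_max_left _ _)⟩

theorem limsupEl_base_le_of_antitoneOn (hX : AntitoneOn X (Iio ζ)) {ξ : Ordinal} (hξ : ξ < ζ) :
    limsupEl .base ζ (fun ξ _ => X ξ) ≤ X ξ :=
  limsupEl_base_le hξ fun _ hξη hη => hX hξ hη hξη

theorem liminfEl_base_eq_limsupEl_base (hζ : ζ < ω₁) (h0 : 0 < ζ)
    (hX : MonotoneOn X (Iio ζ) ∨ AntitoneOn X (Iio ζ)) :
    liminfEl .base ζ (fun ξ _ => X ξ) = limsupEl .base ζ (fun ξ _ => X ξ) := by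
  refine le_antisymm (liminfEl_base_le_limsupEl_base hζ h0) ?_
  rcases hX with hX | hX
  · exact limsupEl_base_le h0 fun ξ _ hξ =>
      le_liminfEl_base hζ hξ fun _ hξη hη => hX hξ hη hξη
  · exact le_liminfEl_base hζ h0 fun _ _ hξ => limsupEl_base_le_of_antitoneOn hX hξ

end LimsupLiminf

theorem monotoneOn_Iio_of_forall_lt_le {β : Type*} [Preorder β] {X : Ordinal → β} {c : Ordinal}
    (step : ∀ η < c, MonotoneOn X (Iio η) → ∀ ξ < η, X ξ ≤ X η) : MonotoneOn X (Iio c) := by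
  suffices key : ∀ η < c, ∀ ξ < η, X ξ ≤ X η from
    monotoneOn_iff_forall_lt.2 fun ξ _ η hη hξη => key η hη ξ hξη
  intro η
  induction η using WellFoundedLT.induction with
  | _ η IH =>
    exact fun hη => step η hη <|
      monotoneOn_iff_forall_lt.2 fun a _ b hb hab => IH b hb (hb.trans hη) a hab

section Iterates

theorem iter_zero (σ : Ty) (f : El σ → El σ) (x : El σ) : Iter σ 0 f x = x := by
  rw [Iter, Ordinal.limitRecOn_zero]

theorem iter_succ (σ : Ty) (ξ : Ordinal) (f : El σ → El σ) (x : El σ) :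
    Iter σ (Order.succ ξ) f x = f (Iter σ ξ f x) := by
  rw [Iter, Order.succ_eq_add_one, Ordinal.limitRecOn_add_one]
  rfl

theorem iter_of_isSuccLimit (σ : Ty) {μ : Ordinal} (hμ : Order.IsSuccLimit μ) (f : El σ → El σ)
    (x : El σ) : Iter σ μ f x = limsupEl σ μ (fun ξ _ => Iter σ ξ f x) := by
  rw [Iter, Ordinal.limitRecOn_limit _ _ _ _ hμ]
  rfl

variable {f : Om → Om} {β : Om}

theorem iter_le_apply_iter (hf : Monotone f) (hβ : β ≤ f β) {ζ : Ordinal}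
    (hX : MonotoneOn (fun ξ => Iter .base ξ f β) (Iic ζ)) :
    Iter .base ζ f β ≤ f (Iter .base ζ f β) := by
  rcases Ordinal.zero_or_succ_or_isSuccLimit ζ with rfl | ⟨ν, rfl⟩ | hlim
  · rwa [iter_zero]
  · have hstep : Iter .base ν f β ≤ Iter .base (Order.succ ν) f β :=
      hX (Order.le_succ ν) self_mem_Iic (Order.le_succ ν)
    rw [iter_succ] at hstep ⊢
    exact hf hstep
  · calc Iter .base ζ f β = limsupEl .base ζ (fun ξ _ => Iter .base ξ f β) :=
          iter_of_isSuccLimit .base hlim f β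
      _ ≤ f (Iter .base ζ f β) := limsupEl_base_le hlim.pos fun ξ _ hξ => by
        have hsucc : Iter .base ξ f β ≤ Iter .base (Order.succ ξ) f β :=
          hX hξ.le (hlim.succ_lt hξ).le (Order.le_succ ξ)
        rw [iter_succ] at hsucc
        exact hsucc.trans (hf (hX hξ.le self_mem_Iic hξ.le))

theorem apply_iter_le_iter (hf : Monotone f) (hβ : f β ≤ β) {ζ : Ordinal} (hζ : ζ < ω₁)
    (hX : AntitoneOn (fun ξ => Iter .base ξ f β) (Iic ζ)) :
    f (Iter .base ζ f β) ≤ Iter .base ζ f β := by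
  rcases Ordinal.zero_or_succ_or_isSuccLimit ζ with rfl | ⟨ν, rfl⟩ | hlim
  · rwa [iter_zero]
  · have hstep : Iter .base (Order.succ ν) f β ≤ Iter .base ν f β :=
      hX (Order.le_succ ν) self_mem_Iic (Order.le_succ ν)
    rw [iter_succ] at hstep ⊢
    exact hf hstep
  · calc f (Iter .base ζ f β) ≤ limsupEl .base ζ (fun ξ _ => Iter .base ξ f β) :=
          le_limsupEl_base hζ hlim.pos fun γ hγ => ⟨Order.succ γ, Order.le_succ γ,
            hlim.succ_lt hγ, by rw [iter_succ]; exact hf (hX hγ.le self_mem_Iic hγ.le)⟩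
      _ = Iter .base ζ f β := (iter_of_isSuccLimit .base hlim f β).symm

theorem monotoneOn_iter (hf : Monotone f) (hβ : β ≤ f β) :
    MonotoneOn (fun ξ => Iter .base ξ f β) (Iio ω₁) := by
  refine monotoneOn_Iio_of_forall_lt_le fun η hη hX ξ hξ => ?_
  rcases Ordinal.zero_or_succ_or_isSuccLimit η with rfl | ⟨ζ, rfl⟩ | hlim
  · exact absurd hξ not_lt_zero
  · rw [Order.Iio_succ] at hX
    rw [iter_succ]
    exact (hX (Order.lt_succ_iff.1 hξ) self_mem_Iic (Order.lt_succ_iff.1 hξ)).trans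
      (iter_le_apply_iter hf hβ hX)
  · rw [iter_of_isSuccLimit .base hlim]
    exact le_limsupEl_base_of_monotoneOn hX hη hξ

theorem antitoneOn_iter (hf : Monotone f) (hβ : f β ≤ β) :
    AntitoneOn (fun ξ => Iter .base ξ f β) (Iio ω₁) := by
  refine monotoneOn_toDual_comp_iff.1 <| monotoneOn_Iio_of_forall_lt_le fun η hη hX ξ hξ => ?_
  rw [monotoneOn_toDual_comp_iff] at hX
  show Iter .base η f β ≤ Iter .base ξ f β
  rcases Ordinal.zero_or_succ_or_isSuccLimit η with rfl | ⟨ζ, rfl⟩ | hlim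
  · exact absurd hξ not_lt_zero
  · rw [Order.Iio_succ] at hX
    rw [iter_succ]
    exact (apply_iter_le_iter hf hβ ((Order.lt_succ ζ).trans hη) hX).trans
      (hX (Order.lt_succ_iff.1 hξ) self_mem_Iic (Order.lt_succ_iff.1 hξ))
  · rw [iter_of_isSuccLimit .base hlim]
    exact limsupEl_base_le_of_antitoneOn hX hξ

end Iterates

/-- If `f : Ω → Ω` is monotone and `α` is a countable limit ordinal,
then for every `β ∈ Ω` the limit `lim_{ξ→α} Iter_ξ f β` exists and equals
`Iter_α f β` (i.e. both `limsup` and `liminf` of the iterates equal `Iter_α f β`). -/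
theorem iter_limit_is_lim (f : Om → Om) (hf : Monotone f)
    (α : Ordinal) (hα : α < ω₁) (hlim : Order.IsSuccLimit α) (β : Om) :
    limsupEl .base α (fun ξ _ => Iter .base ξ f β) = Iter .base α f β ∧
    liminfEl .base α (fun ξ _ => Iter .base ξ f β) = Iter .base α f β := by
  have hsup := (iter_of_isSuccLimit .base hlim f β).symm
  have hX : MonotoneOn (fun ξ => Iter .base ξ f β) (Iio α) ∨
      AntitoneOn (fun ξ => Iter .base ξ f β) (Iio α) :=
    (le_total β (f β)).imp (fun hβ => (monotoneOn_iter hf hβ).mono (Iio_subset_Iio hα.le))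
      (fun hβ => (antitoneOn_iter hf hβ).mono (Iio_subset_Iio hα.le))
  exact ⟨hsup, (liminfEl_base_eq_limsupEl_base hα hlim.pos hX).trans hsup⟩

end IterOrd
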